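/- Let (X, F, P) and (X', F', P') be Frölicher spaces and f : X → X' a map. Then f is smooth in the Frölicher sense (f ∘ P ⊆ P') if and only if f is smooth for the underlying diffeologies D∞(F) and D∞(F'), i.e. f ∘ D∞(F) ⊆ D∞(F'). -/

import Mathlib

/-- A parametrization `f : (Fin p → ℝ) → X` is a plot (on the open set `O ⊆ ℝ^p`)
for the nebula diffeology `D∞(F)` of a Frölicher space with function space `F` iff
`g ∘ f` is smooth on `O` for every `g ∈ F`. -/
def IsPlot {X : Type*} (F : Set (X → ℝ)) {p : ℕ} (O : Set (Fin p → ℝ))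
    (f : (Fin p → ℝ) → X) : Prop :=
  ∀ g ∈ F, ContDiffOn ℝ (⊤ : ℕ∞) (g ∘ f) O

/-- A map between Frölicher spaces is smooth in the Frölicher sense (`f ∘ P ⊆ P'`)
iff it is smooth for the underlying nebula diffeologies `D∞(F)` and `D∞(F')`
(it sends plots to plots). -/
theorem frolicher_smooth_iff_diffeology_smooth {X X' : Type*}
    (F : Set (X → ℝ)) (P : Set (ℝ → X))
    (F' : Set (X' → ℝ)) (P' : Set (ℝ → X'))
    (hF : ∀ g : X → ℝ, g ∈ F ↔ ∀ c ∈ P, ContDiff ℝ (⊤ : ℕ∞) (g ∘ c))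
    (hP : ∀ c : ℝ → X, c ∈ P ↔ ∀ g ∈ F, ContDiff ℝ (⊤ : ℕ∞) (g ∘ c))
    (hF' : ∀ g : X' → ℝ, g ∈ F' ↔ ∀ c ∈ P', ContDiff ℝ (⊤ : ℕ∞) (g ∘ c))
    (hP' : ∀ c : ℝ → X', c ∈ P' ↔ ∀ g ∈ F', ContDiff ℝ (⊤ : ℕ∞) (g ∘ c))
    (f : X → X') :
    (∀ c ∈ P, (f ∘ c) ∈ P') ↔
    (∀ (p : ℕ) (O : Set (Fin p → ℝ)) (φ : (Fin p → ℝ) → X), IsOpen O →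
      IsPlot F O φ → IsPlot F' O (f ∘ φ)) := by
  constructor
  · intro h p O φ _ hφ g' hg'
    have hgf : (g' ∘ f) ∈ F := by
      rw [hF]
      intro c hc
      exact (hF' g').mp hg' (f ∘ c) (h c hc)
    exact hφ (g' ∘ f) hgf
  · intro h c hc
    rw [hP']
    intro g' hg'
    -- build a 1-dimensional plot from c
    have key := h 1 Set.univ (c ∘ (fun v : Fin 1 → ℝ => v 0)) isOpen_univ
      (by
        intro g hg
        have : ContDiff ℝ (⊤ : ℕ∞) (g ∘ c) := (hP c).mp hc g hg
        exact (this.comp (contDiff_apply ℝ ℝ (0 : Fin 1))).contDiffOn)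
      g' hg'
    have h2 : ContDiff ℝ (⊤ : ℕ∞) (g' ∘ f ∘ c ∘ (fun v : Fin 1 → ℝ => v 0)) := by
      rw [← contDiffOn_univ]
      exact key
    have h3 : ContDiff ℝ (⊤ : ℕ∞) (fun x : ℝ => (fun _ : Fin 1 => x)) := contDiff_pi.mpr fun _ => contDiff_id
    have := h2.comp h3
    convert this using 1
    rfl
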